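/- arXiv:1412.0486 — 12 statements merged into one kernel-verified Lean document; each statement's English description precedes it below -/
import Mathlib

section
/- Let g be a Lie algebra and T : g → g a linear map satisfying T([T(a),b]) = [T(a),T(b)] for all a,b (an averaging operator). Then the bracket {a,b} := [T(a),b] satisfies the left Leibniz identity: {x,{y,z}} = {{x,y},z} + {y,{x,z}} for all x,y,z in g. -/
/-- If `T` is an averaging operator on a Lie algebra `g`, then the bracket
`{a,b} := ⁅T a, b⁆` satisfies the left Leibniz identity. -/
theorem averaging_gives_leibniz {g : Type*} [LieRing g] [LieAlgebra ℂ g]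
    (T : g →ₗ[ℂ] g) (hT : ∀ a b : g, T ⁅T a, b⁆ = ⁅T a, T b⁆) :
    ∀ x y z : g, ⁅T x, ⁅T y, z⁆⁆ = ⁅T ⁅T x, y⁆, z⁆ + ⁅T y, ⁅T x, z⁆⁆ := by
  intro x y z
  rw [hT, leibniz_lie]
end

section
/- Let A be a simple finite-dimensional algebra over ℂ (not necessarily associative) and T a bijective averaging operator on A. Then T is a scalar multiple of the identity. -/
/-- A bijective averaging operator on a finite-dimensional simple (not necessarily
associative) complex algebra is a scalar multiple of the identity. -/
theorem bijective_averaging_on_simple_is_scalar {A : Type*} [NonUnitalNonAssocRing A]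
    [Module ℂ A] [SMulCommClass ℂ A A] [IsScalarTower ℂ A A] [FiniteDimensional ℂ A]
    (hAA : ∃ a b : A, a * b ≠ 0)
    (hsimple : ∀ I : Submodule ℂ A,
      (∀ a ∈ I, ∀ b : A, a * b ∈ I ∧ b * a ∈ I) → I = ⊥ ∨ I = ⊤)
    (T : A →ₗ[ℂ] A) (hbij : Function.Bijective T)
    (hT : ∀ a b : A, T (T a * b) = T a * T b ∧ T a * T b = T (a * T b)) :
    ∃ c : ℂ, T = c • LinearMap.id := by
  -- T is in the centroid
  have hTl : ∀ x b : A, T (x * b) = T x * b := by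
    intro x b
    obtain ⟨y, rfl⟩ := hbij.2 b
    exact ((hT x y).2).symm ▸ (hT x y).2.symm
  have hTr : ∀ a y : A, T (a * y) = a * T y := by
    intro a y
    obtain ⟨x, rfl⟩ := hbij.2 a
    exact (hT x y).1
  -- A is nontrivial
  obtain ⟨a0, b0, hab0⟩ := hAA
  have : Nontrivial A := nontrivial_of_ne (a0 * b0) 0 hab0
  -- eigenvalue
  obtain ⟨c, hc⟩ := Module.End.exists_eigenvalue (T : Module.End ℂ A)
  obtain ⟨v, hv⟩ := hc.exists_hasEigenvector
  refine ⟨c, ?_⟩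
  set S : A →ₗ[ℂ] A := T - c • LinearMap.id with hS
  have hSl : ∀ a b : A, S (a * b) = S a * b := by
    intro a b
    simp only [hS, LinearMap.sub_apply, LinearMap.smul_apply, LinearMap.id_apply,
      hTl, sub_mul, smul_mul_assoc]
  have hSr : ∀ a b : A, S (a * b) = a * S b := by
    intro a b
    simp only [hS, LinearMap.sub_apply, LinearMap.smul_apply, LinearMap.id_apply,
      hTr, mul_sub, mul_smul_comm]
  have hker : LinearMap.ker S = ⊤ := by
    rcases hsimple (LinearMap.ker S) (fun a ha b => by
      constructor
      · rw [LinearMap.mem_ker, hSl]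
        rw [LinearMap.mem_ker] at ha
        rw [ha, zero_mul]
      · rw [LinearMap.mem_ker, hSr]
        rw [LinearMap.mem_ker] at ha
        rw [ha, mul_zero]) with h | h
    · exfalso
      have hvker : v ∈ LinearMap.ker S := by
        rw [LinearMap.mem_ker]
        simp only [hS, LinearMap.sub_apply, LinearMap.smul_apply, LinearMap.id_apply]
        rw [sub_eq_zero]
        exact hv.apply_eq_smul
      rw [h, Submodule.mem_bot] at hvker
      exact hv.2 hvker
    · exact h
  have : S = 0 := by
    ext x
    have : x ∈ LinearMap.ker S := hker ▸ Submodule.mem_top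
    simpa using this
  have := sub_eq_zero.mp this
  simpa [hS] using this
end

section
/- Let g be a semisimple finite-dimensional Lie algebra with Killing form ⟨·,·⟩, and T : g → g a symmetric (self-adjoint with respect to the Killing form) averaging operator. Then P_u := u⁻¹ T satisfies the operator classical Yang–Baxter equation P_{u+v}([x, P_u*(y)]) − P_v([P_u(x), y]) + [P_{u+v}(x), P_v(y)] = 0 for all x,y ∈ g and all nonzero u,v with u+v ≠ 0. -/
/-- If `T` is an averaging operator on a finite-dimensional semisimple complex Lie algebra
which is self-adjoint with respect to the Killing form, then `P_u = u⁻¹ • T` satisfies the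
operator classical Yang–Baxter equation (here `P_u* = u⁻¹ • T` as well). -/
theorem symmetric_averaging_gives_CYBE {g : Type*} [LieRing g] [LieAlgebra ℂ g]
    [FiniteDimensional ℂ g] [LieAlgebra.IsSemisimple ℂ g]
    (T : g →ₗ[ℂ] g)
    (hT : ∀ a b : g, T ⁅T a, b⁆ = ⁅T a, T b⁆)
    (hsym : ∀ a b : g, killingForm ℂ g (T a) b = killingForm ℂ g a (T b)) :
    ∀ (u v : ℂ), u ≠ 0 → v ≠ 0 → u + v ≠ 0 → ∀ x y : g,
      (u + v)⁻¹ • T ⁅x, u⁻¹ • T y⁆ - v⁻¹ • T ⁅u⁻¹ • T x, y⁆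
        + ⁅(u + v)⁻¹ • T x, v⁻¹ • T y⁆ = 0 := by
  intro u v hu hv huv x y
  have key : T ⁅x, T y⁆ = ⁅T x, T y⁆ := by
    have := hT y x
    calc T ⁅x, T y⁆ = - T ⁅T y, x⁆ := by rw [← lie_skew, map_neg]
    _ = - ⁅T y, T x⁆ := by rw [this]
    _ = ⁅T x, T y⁆ := by rw [← lie_skew, neg_neg]
  rw [lie_smul, smul_lie, lie_smul, smul_lie, map_smul, map_smul, key, hT, smul_smul, smul_smul,
    smul_smul]
  rw [← sub_smul, ← add_smul]
  convert zero_smul ℂ _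
  field_simp
  ring
end

section
/- Let g be a semisimple finite-dimensional Lie algebra and T an averaging operator on g satisfying T([T*(x),y] − [T(x),y]) = 0 for all x,y ∈ g, where T* is the Killing-form adjoint of T. Then P_u := u⁻¹T is a solution of the operator classical Yang–Baxter equation P_{u+v}([x,P_u*(y)]) − P_v([P_u(x),y]) + [P_{u+v}(x),P_v(y)] = 0. -/
/-- If `T` is an averaging operator on a finite-dimensional semisimple complex Lie algebra
satisfying `T(⁅T* x, y⁆ − ⁅T x, y⁆) = 0`, where `T*` is the Killing-form adjoint of `T`,
then `P_u = u⁻¹ • T` solves the operator classical Yang–Baxter equation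
(with `P_u* = u⁻¹ • T*`). -/
theorem averaging_with_symmetry_gives_CYBE {g : Type*} [LieRing g] [LieAlgebra ℂ g]
    [FiniteDimensional ℂ g] [LieAlgebra.IsSemisimple ℂ g]
    (T Tstar : g →ₗ[ℂ] g)
    (hadj : ∀ a b : g, killingForm ℂ g (T a) b = killingForm ℂ g a (Tstar b))
    (hT : ∀ a b : g, T ⁅T a, b⁆ = ⁅T a, T b⁆)
    (hsymcond : ∀ x y : g, T (⁅Tstar x, y⁆ - ⁅T x, y⁆) = 0) :
    ∀ (u v : ℂ), u ≠ 0 → v ≠ 0 → u + v ≠ 0 → ∀ x y : g,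
      (u + v)⁻¹ • T ⁅x, u⁻¹ • Tstar y⁆ - v⁻¹ • T ⁅u⁻¹ • T x, y⁆
        + ⁅(u + v)⁻¹ • T x, v⁻¹ • T y⁆ = 0 := by
  intro u v hu hv huv x y
  have h2 : T ⁅Tstar y, x⁆ = ⁅T y, T x⁆ := by
    have h := hsymcond y x
    rw [map_sub, sub_eq_zero] at h
    rw [h, hT]
  have h1 : T ⁅x, Tstar y⁆ = ⁅T x, T y⁆ := by
    rw [← lie_skew, map_neg, h2, ← lie_skew, neg_neg]
  simp only [lie_smul, smul_lie, map_smul, smul_smul, h1, hT]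
  rw [sub_eq_add_neg, ← neg_smul, ← add_smul, ← add_smul]
  convert zero_smul ℂ _
  field_simp
  ring
end

section
/- Let g be a Lie algebra and T_λ = Σ_{n=0}^N λ^{(n)}T_n a conformal averaging operator on g. If B is a subspace of g with [T_*(B), B] ⊆ B, where T_*(B) = span{T_n(b) : n ≥ 0, b ∈ B}, then T_*(B) is a Lie subalgebra of g. -/
open Finset in
/-- Let `T_λ` be a conformal averaging operator on `g`. If a subspace `B` satisfies
`⁅T_*(B), B⁆ ⊆ B`, then `T_*(B)` (the span of all `T_n(b)`, `b ∈ B`) is a Lie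
subalgebra of `g`. -/
theorem Tstar_is_subalgebra {g : Type*} [LieRing g] [LieAlgebra ℂ g]
    (T : ℕ → (g →ₗ[ℂ] g)) (N : ℕ) (hsupp : ∀ n, N < n → T n = 0)
    (hT : ∀ (n m : ℕ) (x y : g),
      ⁅T n x, T m y⁆ =
        ∑ t ∈ range (n + 1), (n.choose t : ℂ) • T (m + t) ⁅T (n - t) x, y⁆)
    (B : Submodule ℂ g)
    (TstarB : Submodule ℂ g)
    (hTstarB : TstarB = Submodule.span ℂ {x | ∃ n : ℕ, ∃ b ∈ B, T n b = x})
    (hB : ∀ x ∈ TstarB, ∀ b ∈ B, ⁅x, b⁆ ∈ B) :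
    ∀ x ∈ TstarB, ∀ y ∈ TstarB, ⁅x, y⁆ ∈ TstarB := by
  intro x hx y hy
  rw [hTstarB] at hx hy ⊢
  induction hx using Submodule.span_induction with
  | mem x hxS =>
    induction hy using Submodule.span_induction with
    | mem y hyS =>
      obtain ⟨n, b, hb, rfl⟩ := hxS
      obtain ⟨m, c, hc, rfl⟩ := hyS
      rw [hT]
      refine Submodule.sum_mem _ fun t _ => Submodule.smul_mem _ _ ?_
      refine Submodule.subset_span ⟨m + t, ⁅T (n - t) b, c⁆, ?_, rfl⟩
      refine hB _ ?_ c hc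
      rw [hTstarB]
      exact Submodule.subset_span ⟨n - t, b, hb, rfl⟩
    | zero => simp
    | add y z _ _ hy hz => rw [lie_add]; exact Submodule.add_mem _ hy hz
    | smul a y _ hy => rw [lie_smul]; exact Submodule.smul_mem _ _ hy
  | zero => simp
  | add x z _ _ hx' hz' => rw [add_lie]; exact Submodule.add_mem _ hx' hz'
  | smul a x _ hx' => rw [smul_lie]; exact Submodule.smul_mem _ _ hx'
end

section
/- Let g be a Lie algebra and T_λ = Σ_{n=0}^N λ^{(n)}T_n a conformal averaging operator. For each n set T_{(n)}(g) = T_n(g) + T_{n+1}(g) + ... + T_N(g). Then each T_{(n)}(g) is an ideal of the subalgebra T_*(g) = T_{(0)}(g). -/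
open Finset in
/-- For a conformal averaging operator `T_λ = Σ_{n=0}^N λ^(n) T_n` on a Lie algebra `g`,
each subspace `T_{(n)}(g) = T_n(g) + ⋯ + T_N(g)` is an ideal of the subalgebra
`T_*(g) = T_{(0)}(g)`. -/
theorem Tgeq_is_ideal_of_Tstar {g : Type*} [LieRing g] [LieAlgebra ℂ g]
    (T : ℕ → (g →ₗ[ℂ] g)) (N : ℕ) (hsupp : ∀ n, N < n → T n = 0)
    (hT : ∀ (n m : ℕ) (x y : g),
      ⁅T n x, T m y⁆ =
        ∑ t ∈ range (n + 1), (n.choose t : ℂ) • T (m + t) ⁅T (n - t) x, y⁆)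
    (Tgeq : ℕ → Submodule ℂ g)
    (hTgeq : ∀ n, Tgeq n = ⨆ m ∈ {m : ℕ | n ≤ m}, LinearMap.range (T m)) :
    ∀ n : ℕ, ∀ x ∈ Tgeq 0, ∀ y ∈ Tgeq n, ⁅x, y⁆ ∈ Tgeq n := by
  intro n
  have hrange : ∀ m : ℕ, n ≤ m → LinearMap.range (T m) ≤ Tgeq n := by
    intro m hm
    rw [hTgeq n]
    exact le_iSup₂ (f := fun m (_ : m ∈ {m : ℕ | n ≤ m}) => LinearMap.range (T m)) m hm
  let P : Submodule ℂ g :=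
    { carrier := {x | ∀ y ∈ Tgeq n, ⁅x, y⁆ ∈ Tgeq n}
      add_mem' := fun {a b} ha hb y hy => by
        rw [add_lie]; exact (Tgeq n).add_mem (ha y hy) (hb y hy)
      zero_mem' := fun y hy => by rw [zero_lie]; exact (Tgeq n).zero_mem
      smul_mem' := fun c a ha y hy => by
        rw [smul_lie]; exact (Tgeq n).smul_mem c (ha y hy) }
  have hP : Tgeq 0 ≤ P := by
    rw [hTgeq 0]
    refine iSup₂_le fun k _ => ?_
    rintro _ ⟨x0, rfl⟩
    intro y hy
    let Q : Submodule ℂ g :=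
      { carrier := {y | ⁅T k x0, y⁆ ∈ Tgeq n}
        add_mem' := fun {a b} ha hb => by
          simp only [Set.mem_setOf_eq, lie_add] at *
          exact (Tgeq n).add_mem ha hb
        zero_mem' := by simp only [Set.mem_setOf_eq, lie_zero]; exact (Tgeq n).zero_mem
        smul_mem' := fun c a ha => by
          simp only [Set.mem_setOf_eq, lie_smul] at *
          exact (Tgeq n).smul_mem c ha }
    have hQ : Tgeq n ≤ Q := by
      rw [hTgeq n]
      refine iSup₂_le fun m hm => ?_
      rintro _ ⟨y0, rfl⟩
      show ⁅T k x0, T m y0⁆ ∈ Tgeq n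
      rw [hT k m x0 y0]
      refine (Tgeq n).sum_mem fun t _ => ?_
      exact (Tgeq n).smul_mem _ (hrange (m + t) (le_trans hm (Nat.le_add_right m t))
        ⟨⁅T (k - t) x0, y0⁆, rfl⟩)
    exact hQ hy
  exact fun x hx y hy => hP hx y hy
end

section
/- Let g be a Lie algebra with conformal averaging operator T_λ = Σ_{n=0}^N λ^{(n)}T_n. Then for every n, every k, and all x,a ∈ g, [T_k(x), T_n(a)] − T_n([T_k(x), a]) ∈ T_{(n+1)}(g), where T_{(n+1)}(g) = Σ_{m>n} T_m(g); i.e., the induced map from g to T_*(g)/T_{(n+1)}(g) given by a ↦ T_n(a) + T_{(n+1)}(g) is a homomorphism of T_*(g)-modules. -/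
open Finset in
/-- For a conformal averaging operator `T_λ` on a Lie algebra `g`,
`⁅T_k x, T_n a⁆ − T_n(⁅T_k x, a⁆) ∈ T_{(n+1)}(g)` for all `n, k, x, a`; that is,
`a ↦ T_n a + T_{(n+1)}(g)` is a homomorphism of `T_*(g)`-modules. -/
theorem Tn_mod_higher_is_module_hom {g : Type*} [LieRing g] [LieAlgebra ℂ g]
    (T : ℕ → (g →ₗ[ℂ] g)) (N : ℕ) (hsupp : ∀ n, N < n → T n = 0)
    (hT : ∀ (n m : ℕ) (x y : g),
      ⁅T n x, T m y⁆ =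
        ∑ t ∈ range (n + 1), (n.choose t : ℂ) • T (m + t) ⁅T (n - t) x, y⁆)
    (Tgeq : ℕ → Submodule ℂ g)
    (hTgeq : ∀ n, Tgeq n = ⨆ m ∈ {m : ℕ | n ≤ m}, LinearMap.range (T m)) :
    ∀ (n k : ℕ) (x a : g), ⁅T k x, T n a⁆ - T n ⁅T k x, a⁆ ∈ Tgeq (n + 1) := by
  intro n k x a
  rw [hT k n x a, Finset.sum_range_succ']
  simp only [Nat.choose_zero_right, Nat.cast_one, one_smul, Nat.sub_zero, Nat.add_zero,
    add_sub_cancel_right]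
  refine Submodule.sum_mem _ fun i _ => Submodule.smul_mem _ _ ?_
  rw [hTgeq]
  refine Submodule.mem_iSup_of_mem (n + (i + 1)) (Submodule.mem_iSup_of_mem ?_ ?_)
  · exact Nat.add_le_add_left (Nat.le_add_left 1 i) n
  · exact ⟨_, rfl⟩
end

section
/- Let g be a finite-dimensional semisimple Lie algebra and T_λ = Σ_{n=0}^N λ^{(n)}T_n a conformal averaging operator with T_*(g) = g (non-degenerate). Then T_n = 0 for all n ≥ 1; in other words, T_λ = T₀ is an ordinary averaging operator on g. -/
open Finset in
private lemma conformal_aux {g : Type*} [LieRing g] [LieAlgebra ℂ g]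
    [LieAlgebra.IsSemisimple ℂ g]
    (T : ℕ → (g →ₗ[ℂ] g)) (M : ℕ) (hM : 1 ≤ M) (h0 : ∀ m, M < m → T m = 0)
    (hT : ∀ (n m : ℕ) (x y : g),
      ⁅T n x, T m y⁆ =
        ∑ t ∈ range (n + 1), (n.choose t : ℂ) • T (m + t) ⁅T (n - t) x, y⁆)
    (hnondeg : (⨆ n : ℕ, LinearMap.range (T n)) = ⊤) :
    T M = 0 := by
  -- Step 2: pull out T M from brackets with images of any T n
  have step2 : ∀ (n : ℕ) (x y : g), ⁅T n x, T M y⁆ = T M ⁅T n x, y⁆ := by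
    intro n x y
    rw [hT n M x y, Finset.sum_eq_single 0]
    · simp
    · intro t ht hne
      have : T (M + t) = 0 := h0 _ (by omega)
      simp [this]
    · intro h; exact absurd (Finset.mem_range.mpr (by omega)) h
  -- Step 1: T M ⁅T M x, y⁆ = 0
  have step1 : ∀ x y : g, T M ⁅T M x, y⁆ = 0 := by
    intro x y
    have h1 : T (M + 1) = 0 := h0 _ (by omega)
    have key := hT (M + 1) (M - 1) x y
    rw [h1] at key
    simp only [LinearMap.zero_apply, zero_lie] at key
    rw [Finset.sum_eq_single 1] at key
    · have e1 : M - 1 + 1 = M := by omega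
      have e2 : M + 1 - 1 = M := by omega
      rw [e1, e2, Nat.choose_one_right] at key
      have : ((M : ℂ) + 1) ≠ 0 := by
        exact_mod_cast (Nat.cast_add_one_ne_zero M : ((M : ℂ) + 1) ≠ 0)
      have := (smul_eq_zero.mp key.symm).resolve_left (by push_cast; exact this)
      exact this
    · intro t ht hne
      rcases Nat.lt_or_ge t 1 with h | h
      · have ht0 : t = 0 := by omega
        subst ht0
        simp [h1]
      · have h2 : 2 ≤ t := by omega
        have : T (M - 1 + t) = 0 := h0 _ (by omega)
        simp [this]
    · intro h; exact absurd (Finset.mem_range.mpr (by omega)) h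
  -- Step 3: via nondegeneracy, T M pulls out of any bracket
  have step3 : ∀ (z y : g), ⁅z, T M y⁆ = T M ⁅z, y⁆ := by
    intro z y
    let φ : g →ₗ[ℂ] g :=
      { toFun := fun w => ⁅w, T M y⁆ - T M ⁅w, y⁆
        map_add' := by
          intro a b
          simp only [add_lie, map_add]
          abel
        map_smul' := by
          intro c a
          simp only [smul_lie, map_smul, smul_sub, RingHom.id_apply] }
    have hker : ∀ n : ℕ, LinearMap.range (T n) ≤ LinearMap.ker φ := by
      intro n
      rintro _ ⟨x, rfl⟩
      simp only [LinearMap.mem_ker]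
      show ⁅T n x, T M y⁆ - T M ⁅T n x, y⁆ = 0
      rw [step2 n x y, sub_self]
    have htop : LinearMap.ker φ = ⊤ := by
      rw [eq_top_iff, ← hnondeg]
      exact iSup_le hker
    have : φ z = 0 := by
      have : z ∈ LinearMap.ker φ := htop ▸ Submodule.mem_top
      exact this
    have h' : ⁅z, T M y⁆ - T M ⁅z, y⁆ = 0 := this
    exact sub_eq_zero.mp h'
  -- Step 4: range (T M) is an abelian ideal, hence trivial by semisimplicity
  let I : LieIdeal ℂ g :=
    { LinearMap.range (T M) with
      lie_mem := by
        rintro x m ⟨y, rfl⟩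
        exact ⟨⁅x, y⁆, (step3 x y).symm⟩ }
  have hmem : ∀ w : g, w ∈ I ↔ w ∈ LinearMap.range (T M) := fun w => Iff.rfl
  have habelian : IsLieAbelian I := by
    constructor
    rintro ⟨a, ha⟩ ⟨b, hb⟩
    obtain ⟨x, rfl⟩ := ha
    obtain ⟨y, rfl⟩ := hb
    apply Subtype.ext
    show ⁅T M x, T M y⁆ = 0
    rw [step2 M x y, step1 x y]
  have hbot : I = ⊥ :=
    (LieAlgebra.hasTrivialRadical_iff_no_abelian_ideals (R := ℂ) (L := g)).mp
      inferInstance I habelian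
  ext x
  have hx : T M x ∈ I := ⟨x, rfl⟩
  rw [hbot] at hx
  simpa using hx

open Finset in
/-- A non-degenerate conformal averaging operator on a finite-dimensional semisimple
complex Lie algebra is an ordinary averaging operator: `T_n = 0` for all `n ≥ 1`. -/
theorem nondegenerate_conformal_averaging_on_semisimple {g : Type*} [LieRing g]
    [LieAlgebra ℂ g] [FiniteDimensional ℂ g] [LieAlgebra.IsSemisimple ℂ g]
    (T : ℕ → (g →ₗ[ℂ] g)) (N : ℕ) (hsupp : ∀ n, N < n → T n = 0)
    (hT : ∀ (n m : ℕ) (x y : g),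
      ⁅T n x, T m y⁆ =
        ∑ t ∈ range (n + 1), (n.choose t : ℂ) • T (m + t) ⁅T (n - t) x, y⁆)
    (hnondeg : (⨆ n : ℕ, LinearMap.range (T n)) = ⊤) :
    ∀ n : ℕ, 1 ≤ n → T n = 0 := by
  have key : ∀ d n, 1 ≤ n → N ≤ n + d → T n = 0 := by
    intro d
    induction d with
    | zero =>
      intro n h1 hle
      rcases Nat.lt_or_ge N n with h | h
      · exact hsupp n h
      · have hMN : N = n := by omega
        exact conformal_aux T n h1 (fun m hm => hsupp m (by omega)) hT hnondeg
    | succ d ih =>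
      intro n h1 hle
      by_cases hc : N ≤ n + d
      · exact ih n h1 hc
      · have h0 : ∀ m, n < m → T m = 0 := by
          intro m hm
          rcases Nat.lt_or_ge N m with h | h
          · exact hsupp m h
          · exact ih m (by omega) (by omega)
        exact conformal_aux T n h1 h0 hT hnondeg
  intro n hn
  exact key N n hn (by omega)
end

section
/- Let g be a Lie algebra with conformal averaging operator T_λ = Σ_{n=0}^N λ^{(n)}T_n with N ≥ 1 and T_*(g) = g. Then the image T_N(g) is an abelian ideal of g. -/
open Finset in
/-- If `T_λ = Σ_{n=0}^N λ^(n) T_n` is a conformal averaging operator on a Lie algebra `g`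
with `N ≥ 1` and `T_*(g) = g`, then the image of `T_N` is an abelian ideal of `g`. -/
theorem top_coefficient_is_abelian_ideal {g : Type*} [LieRing g] [LieAlgebra ℂ g]
    (T : ℕ → (g →ₗ[ℂ] g)) (N : ℕ) (hN : 1 ≤ N) (hsupp : ∀ n, N < n → T n = 0)
    (hT : ∀ (n m : ℕ) (x y : g),
      ⁅T n x, T m y⁆ =
        ∑ t ∈ range (n + 1), (n.choose t : ℂ) • T (m + t) ⁅T (n - t) x, y⁆)
    (hnondeg : (⨆ n : ℕ, LinearMap.range (T n)) = ⊤) :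
    (∀ (x : g), ∀ a ∈ LinearMap.range (T N), ⁅x, a⁆ ∈ LinearMap.range (T N)) ∧
      (∀ a ∈ LinearMap.range (T N), ∀ b ∈ LinearMap.range (T N), ⁅a, b⁆ = 0) := by
  -- Step A: ⁅T n x, T N y⁆ = T N ⁅T n x, y⁆ for all n.
  have hA : ∀ (n : ℕ) (x y : g), ⁅T n x, T N y⁆ = T N ⁅T n x, y⁆ := by
    intro n x y
    rw [hT n N x y, Finset.sum_eq_single 0]
    · simp
    · intro t _ htne
      rw [hsupp (N + t) (by omega)]
      simp
    · intro h
      exact absurd (Finset.mem_range.mpr (Nat.succ_pos n)) h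
  -- Step B: T N ⁅T N x, y⁆ = 0.
  have hB : ∀ x y : g, T N ⁅T N x, y⁆ = 0 := by
    intro x y
    have h := hT (N + 1) (N - 1) x y
    rw [hsupp (N + 1) (by omega)] at h
    rw [Finset.sum_eq_single 1] at h
    · simp only [LinearMap.zero_apply, zero_lie] at h
      have h1 : N - 1 + 1 = N := by omega
      have h2 : N + 1 - 1 = N := by omega
      rw [h1, h2] at h
      have hc : ((N + 1).choose 1 : ℂ) ≠ 0 := by
        rw [Nat.choose_one_right]
        exact_mod_cast Nat.succ_ne_zero N
      have := h.symm
      rcases smul_eq_zero.mp this with hc' | hz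
      · exact absurd hc' hc
      · exact hz
    · intro t ht htne
      rcases Nat.lt_or_ge t 1 with h0 | h1
      · interval_cases t
        · simp only [Nat.sub_zero, Nat.add_zero]
          rw [hsupp (N + 1) (by omega)]
          simp
      · have ht2 : 2 ≤ t := by omega
        rw [hsupp (N - 1 + t) (by omega)]
        simp
    · intro h
      exact absurd (Finset.mem_range.mpr (by omega)) h
  -- The universal identity: ⁅u, T N y⁆ = T N ⁅u, y⁆ for ALL u, by linearity.
  have hU : ∀ (u y : g), ⁅u, T N y⁆ = T N ⁅u, y⁆ := by
    intro u y
    let F : g →ₗ[ℂ] g :=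
      { toFun := fun v => ⁅v, T N y⁆
        map_add' := fun a b => add_lie a b (T N y)
        map_smul' := fun c a => by simp [smul_lie] }
    let G : g →ₗ[ℂ] g :=
      { toFun := fun v => T N ⁅v, y⁆
        map_add' := fun a b => by simp [add_lie]
        map_smul' := fun c a => by simp [smul_lie] }
    have hle : (⨆ n : ℕ, LinearMap.range (T n)) ≤ LinearMap.eqLocus F G := by
      apply iSup_le
      intro n
      rintro _ ⟨x, rfl⟩
      exact hA n x y
    rw [hnondeg] at hle
    exact hle Submodule.mem_top
  constructor
  · rintro x _ ⟨y, rfl⟩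
    exact ⟨⁅x, y⁆, (hU x y).symm⟩
  · rintro _ ⟨x, rfl⟩ _ ⟨y, rfl⟩
    rw [hU (T N x) y]
    exact hB x y
end

section
/- Let g = g₀ ⊕ Z be a finite-dimensional reductive Lie algebra (g₀ semisimple, Z the center) and T_λ a conformal averaging operator on g such that g₀ ⊆ T_*(g). Then T_*(g₀) = g₀ and T_*(Z) ⊆ Z; moreover the restriction of T_λ to g₀ is an ordinary averaging operator on g₀ (i.e., T_λ(a) = T₀(a) ∈ g₀ for a ∈ g₀). -/
/-!
Write `T_λ = ∑ λⁿ/n! • Tₙ`. Comparing coefficients of `λ^a μ^b` in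
`T_{λ+μ} ⁅T_λ x, y⁆ = ⁅T_λ x, T_μ y⁆` gives
`∑_{i+k=a} (a choose k) • T_{i+b} ⁅T_k x, y⁆ = ⁅T_a x, T_b y⁆`.
All brackets of `g` lie in `g₀`, so induction on `a` puts every `T_m ⁅T_k x, y⁆` in `g₀`;
since `g₀ = ⁅g₀, g₀⁆` and `g₀ ⊆ T_*(g)`, this gives `T_n(g₀) ⊆ g₀`, and the same identity
gives `g₀ ⊆ T_*(g₀)`. For central `z` the left-hand side of the identity vanishes, so `T_b z`
commutes with `g₀ ⊆ T_*(g)` and is central. Finally, if `M ≥ 1` is the largest index with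
`T_M(g₀) ≠ 0`, the identity shows that `T_M` commutes with every `ad (T_a x)` and that
`⁅T_M x, T_M y⁆ = 0` for `x ∈ g₀`; so `T_M(g₀)` is an abelian ideal of the semisimple `g₀`,
hence zero.
-/

open Finset

section ExpSum

variable {K V W U : Type*} [Field K] [AddCommGroup V] [Module K V] [AddCommGroup W] [Module K W]
  [AddCommGroup U] [Module K U]

theorem eq_zero_of_forall_sum_pow_smul_eq_zero [Infinite K] {D : ℕ} {v : ℕ → V}
    (h : ∀ t : K, ∑ n ∈ range D, t ^ n • v n = 0) {n : ℕ} (hn : n < D) : v n = 0 := by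
  rw [← Module.forall_dual_apply_eq_zero_iff K]
  intro f
  have hp : ∑ j ∈ range D, Polynomial.C (f (v j)) * Polynomial.X ^ j = 0 := by
    refine Polynomial.funext fun t => ?_
    simpa [Polynomial.eval_finsetSum, mul_comm (f _)] using congrArg f (h t)
  simpa [Polynomial.finsetSum_coeff, Polynomial.coeff_C_mul, Polynomial.coeff_X_pow, hn] using
    congrArg (Polynomial.coeff · n) hp

def expSum (D : ℕ) (v : ℕ → V) (t : K) : V :=
  ∑ n ∈ range D, (t ^ n / n.factorial) • v n

theorem eq_of_expSum_eq [CharZero K] {D : ℕ} {v w : ℕ → V} (hv : ∀ n ≥ D, v n = 0)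
    (hw : ∀ n ≥ D, w n = 0) (h : ∀ t : K, expSum D v t = expSum D w t) : v = w := by
  funext n
  rcases lt_or_ge n D with hn | hn
  · have hvw := eq_zero_of_forall_sum_pow_smul_eq_zero (K := K)
      (v := fun n => ((n.factorial : K)⁻¹) • (v n - w n)) (fun t => ?_) hn
    · simpa [sub_eq_zero, Nat.factorial_ne_zero] using hvw
    · simpa [expSum, smul_sub, sum_sub_distrib, smul_smul, div_eq_mul_inv, sub_eq_zero] using h t
  · rw [hv n hn, hw n hn]

theorem expSum_eq_of_le {D D' : ℕ} (hDD' : D ≤ D') {v : ℕ → V} (hv : ∀ n ≥ D, v n = 0) (t : K) :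
    expSum D' v t = expSum D v t :=
  (sum_subset (range_subset_range.2 hDD') fun n _ hn => by
    rw [hv n (by simpa using hn), smul_zero]).symm

theorem map_expSum (f : V →ₗ[K] W) (D : ℕ) (v : ℕ → V) (t : K) :
    f (expSum D v t) = expSum D (fun n => f (v n)) t := by
  simp [expSum]

theorem div_factorial_mul_div_factorial [CharZero K] (a b : K) (i j : ℕ) :
    a / i.factorial * (b / j.factorial) = (i + j).choose j * (a * b) / (i + j).factorial := by
  rw [← Nat.add_choose_mul_factorial_mul_factorial i j]
  have : ((i + j).choose j : K) ≠ 0 := Nat.cast_ne_zero.2 (Nat.choose_pos (Nat.le_add_left j i)).ne'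
  push_cast
  field_simp

theorem sum_range_sum_antidiagonal {M : Type*} [AddCommMonoid M] {D : ℕ} (f : ℕ → ℕ → M)
    (hf : ∀ i j, D ≤ i + j → f i j = 0) :
    ∑ n ∈ range D, ∑ p ∈ antidiagonal n, f p.1 p.2 = ∑ i ∈ range D, ∑ j ∈ range D, f i j := by
  simp_rw [Nat.sum_antidiagonal_eq_sum_range_succ f, sum_range_diag_flip]
  refine sum_congr rfl fun i hi =>
    sum_subset (range_subset_range.2 (Nat.sub_le D i)) fun j _ hj => hf i j ?_
  simp only [mem_range] at hi hj
  omega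

theorem expSum_add [CharZero K] {D : ℕ} {v : ℕ → V} (hv : ∀ n ≥ D, v n = 0) (l m : K) :
    expSum D v (l + m) = expSum D (fun j => expSum D (fun i => v (i + j)) l) m := by
  calc expSum D v (l + m)
      = ∑ n ∈ range D, ∑ p ∈ antidiagonal n,
          (l ^ p.1 / p.1.factorial * (m ^ p.2 / p.2.factorial)) • v (p.1 + p.2) := by
        refine sum_congr rfl fun n _ => ?_
        rw [(Commute.all l m).add_pow', sum_div, sum_smul]
        refine sum_congr rfl fun p hp => ?_
        rw [HasAntidiagonal.mem_antidiagonal] at hp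
        subst hp
        rw [div_factorial_mul_div_factorial, nsmul_eq_mul, Nat.choose_symm_add]
    _ = ∑ i ∈ range D, ∑ j ∈ range D, (l ^ i / i.factorial * (m ^ j / j.factorial)) • v (i + j) :=
        sum_range_sum_antidiagonal
          (fun i j => (l ^ i / i.factorial * (m ^ j / j.factorial)) • v (i + j)) fun i j h => by
          rw [hv _ h, smul_zero]
    _ = _ := by
        simp only [expSum, smul_sum, smul_smul]
        rw [sum_comm]
        exact sum_congr rfl fun j _ => sum_congr rfl fun i _ => by rw [mul_comm]

theorem bilin_expSum_expSum [CharZero K] (B : V →ₗ[K] W →ₗ[K] U) {D : ℕ} {v : ℕ → V} {w : ℕ → W}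
    (hv : ∀ n ≥ D, v n = 0) (hw : ∀ n ≥ D, w n = 0) (t : K) :
    B (expSum D v t) (expSum D w t) =
      expSum (2 * D) (fun n => ∑ p ∈ antidiagonal n, n.choose p.2 • B (v p.1) (w p.2)) t := by
  set f : ℕ → ℕ → U := fun i j => (t ^ i / i.factorial * (t ^ j / j.factorial)) • B (v i) (w j)
  have hf : ∀ i j, D ≤ i ∨ D ≤ j → f i j = 0 := by
    rintro i j (hi | hj) <;> simp [f, *]
  calc B (expSum D v t) (expSum D w t)
      = ∑ i ∈ range D, ∑ j ∈ range D, f i j := by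
        simp only [f, expSum, map_sum, LinearMap.sum_apply, map_smul, LinearMap.smul_apply,
          smul_sum, smul_smul]
        rw [sum_comm]
        exact sum_congr rfl fun j _ => sum_congr rfl fun i _ => by rw [mul_comm]
    _ = ∑ i ∈ range (2 * D), ∑ j ∈ range (2 * D), f i j := by
        rw [← sum_product', ← sum_product']
        have hD : range D ⊆ range (2 * D) := range_subset_range.2 (by omega)
        refine sum_subset (product_subset_product hD hD) fun p _ hp => hf p.1 p.2 ?_
        simp only [mem_product, mem_range, not_and_or, not_lt] at hp
        exact hp
    _ = ∑ n ∈ range (2 * D), ∑ p ∈ antidiagonal n, f p.1 p.2 :=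
        (sum_range_sum_antidiagonal f fun i j h => hf i j (by omega)).symm
    _ = _ := by
        refine sum_congr rfl fun n _ => ?_
        rw [smul_sum]
        refine sum_congr rfl fun p hp => ?_
        rw [HasAntidiagonal.mem_antidiagonal] at hp
        subst hp
        simp only [f]
        rw [← Nat.cast_smul_eq_nsmul K, smul_smul, div_factorial_mul_div_factorial, pow_add]
        ring_nf

end ExpSum

section LieLemmas

open LieAlgebra

variable {R L : Type*} [CommRing R] [LieRing L] [LieAlgebra R L]

theorem lie_mem_of_mem_span {S S' : Set L} {P : Submodule R L}
    (hSS' : ∀ s ∈ S, ∀ s' ∈ S', ⁅s, s'⁆ ∈ P) {c d : L} (hc : c ∈ Submodule.span R S)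
    (hd : d ∈ Submodule.span R S') : ⁅c, d⁆ ∈ P := by
  have h := Submodule.apply_mem_map₂ (LieModule.toEnd R L L : L →ₗ[R] Module.End R L) hc hd
  rw [Submodule.map₂_span_span] at h
  refine Submodule.span_le.2 ?_ h
  rintro _ ⟨s, hs, s', hs', rfl⟩
  exact hSS' s hs s' hs'

theorem LieAlgebra.IsSemisimple.lie_top_eq_top [IsSemisimple R L] :
    ⁅(⊤ : LieIdeal R L), (⊤ : LieIdeal R L)⁆ = ⊤ := by
  obtain ⟨J, hJ⟩ := exists_isCompl ⁅(⊤ : LieIdeal R L), (⊤ : LieIdeal R L)⁆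
  have hJJ : ⁅J, J⁆ = ⊥ := le_bot_iff.1 <| hJ.inf_eq_bot ▸
    le_inf (LieSubmodule.mono_lie le_top le_top) (LieSubmodule.lie_le_right J J)
  have hJ0 : J = ⊥ := (hasTrivialRadical_iff_no_abelian_ideals R L).1 inferInstance J
    ((LieSubmodule.lie_abelian_iff_lie_self_eq_bot J).2 hJJ)
  exact eq_top_of_isCompl_bot (hJ0 ▸ hJ)

theorem LieIdeal.le_span_lie_of_isSemisimple (I : LieIdeal R L) [IsSemisimple R I] :
    I.toSubmodule ≤ Submodule.span R {x | ∃ c ∈ I, ∃ d ∈ I, ⁅c, d⁆ = x} := by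
  intro a ha
  have h : (⟨a, ha⟩ : I) ∈ (⁅(⊤ : LieIdeal R I), (⊤ : LieIdeal R I)⁆).toSubmodule := by
    rw [IsSemisimple.lie_top_eq_top]; trivial
  rw [LieSubmodule.lieIdeal_oper_eq_linear_span] at h
  have h' := Submodule.apply_mem_span_image_of_mem_span I.toSubmodule.subtype h
  refine Submodule.span_mono ?_ h'
  rintro _ ⟨_, ⟨c, d, rfl⟩, rfl⟩
  exact ⟨c.1, c.1.2, d.1, d.1.2, rfl⟩

theorem LieIdeal.submodule_eq_bot_of_lie_eq_zero {I : LieIdeal R L} [HasTrivialRadical R I]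
    {W : Submodule R L} (hWI : W ≤ I.toSubmodule) (hlie : ∀ c ∈ I, ∀ w ∈ W, ⁅c, w⁆ ∈ W)
    (habel : ∀ w ∈ W, ∀ w' ∈ W, ⁅w, w'⁆ = 0) : W = ⊥ := by
  let J : LieIdeal R I :=
    { W.comap I.toSubmodule.subtype with
      lie_mem := fun {c _} hw => hlie c c.2 _ hw }
  have hJ : J = ⊥ := (hasTrivialRadical_iff_no_abelian_ideals R I).1 inferInstance J
    ⟨fun u v => Subtype.ext (Subtype.ext (habel _ u.2 _ v.2))⟩
  refine (Submodule.eq_bot_iff W).2 fun w hw => ?_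
  have hwJ : (⟨w, hWI hw⟩ : I) ∈ J := hw
  rw [hJ, LieSubmodule.mem_bot] at hwJ
  exact congrArg Subtype.val hwJ

theorem lie_mem_of_codisjoint_center {I : LieIdeal R L}
    (hIZ : Codisjoint I.toSubmodule (center R L).toSubmodule) (u v : L) : ⁅u, v⁆ ∈ I := by
  obtain ⟨p, hp, q, hq, rfl⟩ := Submodule.mem_sup.1 (hIZ.eq_top ▸ Submodule.mem_top : u ∈ _)
  rw [add_lie, ← lie_skew q, (LieModule.mem_maxTrivSubmodule R L L q).1 hq v, neg_zero, add_zero]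
  exact lie_mem_left R L I p v hp

theorem mem_center_of_forall_lie_eq_zero {I : LieIdeal R L}
    (hIZ : Codisjoint I.toSubmodule (center R L).toSubmodule) {v : L}
    (hv : ∀ c ∈ I, ⁅c, v⁆ = 0) : v ∈ center R L := by
  refine (LieModule.mem_maxTrivSubmodule R L L v).2 fun u => ?_
  obtain ⟨p, hp, q, hq, rfl⟩ := Submodule.mem_sup.1 (hIZ.eq_top ▸ Submodule.mem_top : u ∈ _)
  rw [add_lie, hv p hp, ← lie_skew q, (LieModule.mem_maxTrivSubmodule R L L q).1 hq v,
    neg_zero, add_zero]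

end LieLemmas

section ConformalAveraging

open LieAlgebra

variable {R L : Type*} [CommRing R] [LieRing L] [LieAlgebra R L]

/-- The coefficient of `λ^a μ^b / (a! b!)` in `T_{λ+μ} ⁅T_λ x, y⁆ = ⁅T_λ x, T_μ y⁆`, where
`T_λ = ∑ λⁿ/n! • Tₙ`. -/
def IsConformalAveraging (T : ℕ → L →ₗ[R] L) : Prop :=
  ∀ (x y : L) (a b : ℕ),
    ∑ p ∈ antidiagonal a, a.choose p.2 • T (p.1 + b) ⁅T p.2 x, y⁆ = ⁅T a x, T b y⁆

theorem pos_and_lt_of_mem_antidiagonal_erase {k : ℕ} {p : ℕ × ℕ}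
    (hp : p ∈ (antidiagonal k).erase (0, k)) : 0 < p.1 ∧ p.2 < k := by
  obtain ⟨hne, hp⟩ := mem_erase.1 hp
  rw [HasAntidiagonal.mem_antidiagonal] at hp
  have : p.1 ≠ 0 := fun h => hne (Prod.ext h (by omega))
  omega

namespace IsConformalAveraging

variable {T : ℕ → L →ₗ[R] L}

theorem apply_lie_apply_eq (hT : IsConformalAveraging T) (x y : L) (k m : ℕ) :
    T m ⁅T k x, y⁆ = ⁅T k x, T m y⁆ -
      ∑ p ∈ (antidiagonal k).erase (0, k), k.choose p.2 • T (p.1 + m) ⁅T p.2 x, y⁆ := by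
  rw [← hT x y k m, ← add_sum_erase _ _ (by simp : (0, k) ∈ antidiagonal k)]
  simp

theorem apply_lie_apply_mem (hT : IsConformalAveraging T) {I : Submodule R L}
    (hI : ∀ u v : L, ⁅u, v⁆ ∈ I) (k m : ℕ) (x y : L) : T m ⁅T k x, y⁆ ∈ I := by
  induction k using Nat.strong_induction_on generalizing m with
  | _ k ih =>
    rw [hT.apply_lie_apply_eq]
    exact sub_mem (hI _ _) (sum_mem fun p hp =>
      nsmul_mem (ih _ (pos_and_lt_of_mem_antidiagonal_erase hp).2 _) _)

theorem apply_mem (hT : IsConformalAveraging T) {I : LieIdeal R L} [IsSemisimple R I]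
    (hI : ∀ u v : L, ⁅u, v⁆ ∈ I)
    (hspan : I.toSubmodule ≤ Submodule.span R {x | ∃ n : ℕ, ∃ a : L, T n a = x}) (n : ℕ) {a : L}
    (ha : a ∈ I) : T n a ∈ I := by
  suffices a ∈ ⨅ m, I.toSubmodule.comap (T m) from (Submodule.mem_iInf _).1 this n
  refine Submodule.span_le.2 ?_ (I.le_span_lie_of_isSemisimple ha)
  rintro _ ⟨c, hc, d, -, rfl⟩
  refine lie_mem_of_mem_span (S' := {d}) ?_ (hspan hc) (Submodule.mem_span_singleton_self d)
  rintro _ ⟨k, x, rfl⟩ _ rfl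
  exact (Submodule.mem_iInf _).2 fun m => hT.apply_lie_apply_mem hI k m x _

theorem le_span_image (hT : IsConformalAveraging T) {I : LieIdeal R L} [IsSemisimple R I]
    (hI : ∀ u v : L, ⁅u, v⁆ ∈ I)
    (hspan : I.toSubmodule ≤ Submodule.span R {x | ∃ n : ℕ, ∃ a : L, T n a = x}) :
    I.toSubmodule ≤ Submodule.span R {x | ∃ n : ℕ, ∃ a ∈ I, T n a = x} := by
  refine I.le_span_lie_of_isSemisimple.trans (Submodule.span_le.2 ?_)
  rintro _ ⟨c, hc, d, hd, rfl⟩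
  refine lie_mem_of_mem_span ?_ (hspan hc) (hspan hd)
  rintro _ ⟨a, x, rfl⟩ _ ⟨b, y, rfl⟩
  rw [← hT x y a b]
  refine sum_mem fun p _ => nsmul_mem (Submodule.subset_span ?_) _
  exact ⟨_, _, hI _ _, rfl⟩

theorem apply_mem_center (hT : IsConformalAveraging T) {I : LieIdeal R L}
    (hIZ : Codisjoint I.toSubmodule (center R L).toSubmodule)
    (hspan : I.toSubmodule ≤ Submodule.span R {x | ∃ n : ℕ, ∃ a : L, T n a = x}) {z : L}
    (hz : z ∈ center R L) (n : ℕ) : T n z ∈ center R L := by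
  refine mem_center_of_forall_lie_eq_zero hIZ fun c hc => (Submodule.mem_bot R).1 <|
    lie_mem_of_mem_span (S' := {T n z}) ?_ (hspan hc) (Submodule.mem_span_singleton_self _)
  rintro _ ⟨a, x, rfl⟩ _ rfl
  rw [← hT x z a n]
  simp [(LieModule.mem_maxTrivSubmodule R L L z).1 hz]

theorem apply_lie_apply_eq_of_vanish_above (hT : IsConformalAveraging T) {I : Submodule R L}
    (hI : ∀ u v : L, ⁅u, v⁆ ∈ I) {M : ℕ} (hM : ∀ j > M, ∀ a ∈ I, T j a = 0) (k : ℕ) (x y : L) :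
    T M ⁅T k x, y⁆ = ⁅T k x, T M y⁆ := by
  rw [hT.apply_lie_apply_eq, sum_eq_zero, sub_zero]
  intro p hp
  have := (pos_and_lt_of_mem_antidiagonal_erase hp).1
  rw [hM _ (by omega) _ (hI _ _), smul_zero]

end IsConformalAveraging

end ConformalAveraging

section CharZero

open LieAlgebra

variable {K L : Type*} [Field K] [CharZero K] [LieRing L] [LieAlgebra K L]

theorem isConformalAveraging_of_expSum {T : ℕ → L →ₗ[K] L} {N : ℕ} (hsupp : ∀ n, N < n → T n = 0)
    (hT : ∀ (l m : K) (x y : L),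
      expSum (N + 1) (fun n => T n ⁅expSum (N + 1) (fun k => T k x) l, y⁆) (l + m) =
        ⁅expSum (N + 1) (fun n => T n x) l, expSum (N + 1) (fun k => T k y) m⁆) :
    IsConformalAveraging T := by
  intro x y a b
  have hT0 : ∀ n ≥ N + 1, T n = 0 := hsupp
  let X : K → L := expSum (N + 1) (fun k => T k x)
  let adRight : L → L →ₗ[K] L := (LieModule.toEnd K L L : L →ₗ[K] Module.End K L).flip
  have hshift : ∀ l j, expSum (N + 1) (fun i => T (i + j) ⁅X l, y⁆) l = ⁅X l, T j y⁆ := by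
    intro l
    refine congrFun (eq_of_expSum_eq (K := K) (D := N + 1) (fun j hj => ?_) (fun j hj => ?_)
      fun m => ?_)
    · simp [expSum, hT0 _ (le_add_left hj)]
    · simp [hT0 j hj]
    · rw [← expSum_add (v := fun n => T n ⁅X l, y⁆) (fun n hn => by simp [hT0 n hn]), hT l m x y]
      exact map_expSum (LieModule.toEnd K L L (X l)) _ _ _
  have hconv : ∀ l, expSum (2 * (N + 1))
      (fun a => ∑ p ∈ antidiagonal a, a.choose p.2 • T (p.1 + b) ⁅T p.2 x, y⁆) l =
      expSum (2 * (N + 1)) (fun a => ⁅T a x, T b y⁆) l := fun l => calc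
    _ = LinearMap.lcomp K L (adRight y) (expSum (N + 1) (fun i => T (i + b)) l) (X l) :=
        (bilin_expSum_expSum _ (fun n hn => hT0 _ (le_add_right hn))
          (fun n hn => by simp [hT0 n hn]) l).symm
    _ = expSum (N + 1) (fun i => T (i + b) ⁅X l, y⁆) l :=
        map_expSum (LinearMap.applyₗ ⁅X l, y⁆) _ _ _
    _ = ⁅X l, T b y⁆ := hshift l b
    _ = expSum (N + 1) (fun a => ⁅T a x, T b y⁆) l := map_expSum (adRight (T b y)) _ _ _
    _ = _ := (expSum_eq_of_le (by omega) (fun n hn => by simp [hT0 n hn]) l).symm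
  refine congrFun (eq_of_expSum_eq (fun n hn => sum_eq_zero fun p hp => ?_)
    (fun n hn => by simp [hT0 n (by omega)]) hconv) a
  rw [HasAntidiagonal.mem_antidiagonal] at hp
  rcases le_or_gt (N + 1) p.2 with h | h
  · simp [hT0 _ h]
  · simp [hT0 (p.1 + b) (by omega)]

namespace IsConformalAveraging

variable {T : ℕ → L →ₗ[K] L}

theorem lie_apply_apply_eq_zero_of_vanish_above (hT : IsConformalAveraging T) {I : Submodule K L}
    (hI : ∀ u v : L, ⁅u, v⁆ ∈ I) {M : ℕ} (hM1 : 1 ≤ M) (hM : ∀ j > M, ∀ a ∈ I, T j a = 0)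
    {x : L} (hx : x ∈ I) (y : L) : ⁅T M x, T M y⁆ = 0 := by
  -- In the identity at `(2M, 0)` only the term `T_M ⁅T_M x, y⁆` survives.
  have h := hT x y (2 * M) 0
  rw [hM (2 * M) (by omega) x hx, zero_lie,
    sum_eq_single_of_mem (M, M) (HasAntidiagonal.mem_antidiagonal.2 (two_mul M).symm)] at h
  · rw [← hT.apply_lie_apply_eq_of_vanish_above hI hM]
    rw [← Nat.cast_smul_eq_nsmul K, smul_eq_zero] at h
    exact h.resolve_left (Nat.cast_ne_zero.2 (Nat.choose_pos (by omega)).ne')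
  · intro p hp hne
    rw [HasAntidiagonal.mem_antidiagonal] at hp
    rcases lt_or_gt_of_ne (fun h : p.2 = M => hne (Prod.ext (by omega) h)) with hlt | hgt
    · rw [hM _ (by omega) _ (hI _ _), smul_zero]
    · rw [hM _ hgt x hx, zero_lie, map_zero, smul_zero]

theorem apply_eq_zero_of_vanish_above (hT : IsConformalAveraging T) {I : LieIdeal K L}
    [IsSemisimple K I] (hI : ∀ u v : L, ⁅u, v⁆ ∈ I)
    (hspan : I.toSubmodule ≤ Submodule.span K {x | ∃ n : ℕ, ∃ a : L, T n a = x}) {M : ℕ}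
    (hM1 : 1 ≤ M) (hM : ∀ j > M, ∀ a ∈ I, T j a = 0) {a : L} (ha : a ∈ I) : T M a = 0 := by
  have hW : I.toSubmodule.map (T M) = ⊥ := by
    refine LieIdeal.submodule_eq_bot_of_lie_eq_zero (I := I) ?_ ?_ ?_
    · rintro _ ⟨b, hb, rfl⟩
      exact hT.apply_mem hI hspan M hb
    · rintro c hc _ ⟨b, -, rfl⟩
      refine lie_mem_of_mem_span (S' := {T M b}) ?_ (hspan hc)
        (Submodule.mem_span_singleton_self _)
      rintro _ ⟨n, x, rfl⟩ _ rfl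
      rw [← hT.apply_lie_apply_eq_of_vanish_above (I := I.toSubmodule) hI hM]
      exact ⟨_, hI _ _, rfl⟩
    · rintro _ ⟨b, hb, rfl⟩ _ ⟨b', -, rfl⟩
      exact hT.lie_apply_apply_eq_zero_of_vanish_above (I := I.toSubmodule) hI hM1 hM hb _
  exact (Submodule.eq_bot_iff _).1 hW _ ⟨a, ha, rfl⟩

theorem apply_eq_zero (hT : IsConformalAveraging T) {I : LieIdeal K L} [IsSemisimple K I]
    (hI : ∀ u v : L, ⁅u, v⁆ ∈ I)
    (hspan : I.toSubmodule ≤ Submodule.span K {x | ∃ n : ℕ, ∃ a : L, T n a = x}) {N : ℕ}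
    (hsupp : ∀ n, N < n → T n = 0) {n : ℕ} (hn : 1 ≤ n) {a : L} (ha : a ∈ I) : T n a = 0 := by
  have hvanish : ∀ j > 0, ∀ b ∈ I, T j b = 0 := by
    refine Nat.decreasingInduction (motive := fun M _ => ∀ j > M, ∀ b ∈ I, T j b = 0)
      (fun k _ hk j hj b hb => ?_) (fun j hj b _ => by rw [hsupp j hj]; rfl) (Nat.zero_le N)
    rcases (Nat.succ_le_of_lt hj).eq_or_lt with rfl | hlt
    · exact hT.apply_eq_zero_of_vanish_above hI hspan (Nat.succ_pos k) hk hb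
    · exact hk j hlt b hb
  exact hvanish n hn a ha

end IsConformalAveraging

end CharZero

open Finset in
theorem conformal_averaging_on_reductive_general {g : Type*} [LieRing g] [LieAlgebra ℂ g]
    (g₀ : LieIdeal ℂ g) [LieAlgebra.IsSemisimple ℂ ↥g₀]
    (hred : IsCompl g₀.toSubmodule (LieAlgebra.center ℂ g).toSubmodule)
    (T : ℕ → (g →ₗ[ℂ] g)) (N : ℕ) (hsupp : ∀ n, N < n → T n = 0)
    (hT : ∀ (l m : ℂ) (x y : g),
      ∑ n ∈ range (N + 1), (((l + m) ^ n / n.factorial : ℂ)) •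
          T n ⁅∑ k ∈ range (N + 1), ((l ^ k / k.factorial : ℂ)) • T k x, y⁆ =
        ⁅∑ n ∈ range (N + 1), ((l ^ n / n.factorial : ℂ)) • T n x,
          ∑ k ∈ range (N + 1), ((m ^ k / k.factorial : ℂ)) • T k y⁆)
    (hhom : g₀.toSubmodule ≤
      Submodule.span ℂ {x : g | ∃ n : ℕ, ∃ a : g, T n a = x}) :
    (Submodule.span ℂ {x : g | ∃ n : ℕ, ∃ a ∈ g₀, T n a = x} = g₀.toSubmodule) ∧
    (Submodule.span ℂ {x : g | ∃ n : ℕ, ∃ z ∈ LieAlgebra.center ℂ g, T n z = x} ≤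
      (LieAlgebra.center ℂ g).toSubmodule) ∧
    (∀ a ∈ g₀, T 0 a ∈ g₀ ∧ ∀ n : ℕ, 1 ≤ n → T n a = 0) := by
  have hTc : IsConformalAveraging T := isConformalAveraging_of_expSum hsupp hT
  have hbr : ∀ u v : g, ⁅u, v⁆ ∈ g₀ := lie_mem_of_codisjoint_center hred.codisjoint
  refine ⟨le_antisymm ?_ (hTc.le_span_image hbr hhom), Submodule.span_le.2 ?_, fun a ha =>
    ⟨hTc.apply_mem hbr hhom 0 ha, fun n hn => hTc.apply_eq_zero hbr hhom hsupp hn ha⟩⟩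
  · refine Submodule.span_le.2 ?_
    rintro _ ⟨n, a, ha, rfl⟩
    exact hTc.apply_mem hbr hhom n ha
  · rintro _ ⟨n, z, hz, rfl⟩
    exact hTc.apply_mem_center hred.codisjoint hhom hz n

open Finset in
/-- Let `g = g₀ ⊕ Z` be a finite-dimensional reductive complex Lie algebra (`g₀`
semisimple, `Z` the center) and `T_λ` a conformal averaging operator on `g` with
`g₀ ⊆ T_*(g)`.  Then `T_*(g₀) = g₀`, `T_*(Z) ⊆ Z`, and the restriction of `T_λ` to `g₀`
is an ordinary averaging operator: `T_λ(a) = T₀(a) ∈ g₀` for `a ∈ g₀`. -/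
theorem conformal_averaging_on_reductive {g : Type*} [LieRing g] [LieAlgebra ℂ g]
    [FiniteDimensional ℂ g]
    (g₀ : LieIdeal ℂ g) [LieAlgebra.IsSemisimple ℂ ↥g₀]
    (hred : IsCompl g₀.toSubmodule (LieAlgebra.center ℂ g).toSubmodule)
    (T : ℕ → (g →ₗ[ℂ] g)) (N : ℕ) (hsupp : ∀ n, N < n → T n = 0)
    (hT : ∀ (l m : ℂ) (x y : g),
      ∑ n ∈ range (N + 1), (((l + m) ^ n / n.factorial : ℂ)) •
          T n ⁅∑ k ∈ range (N + 1), ((l ^ k / k.factorial : ℂ)) • T k x, y⁆ =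
        ⁅∑ n ∈ range (N + 1), ((l ^ n / n.factorial : ℂ)) • T n x,
          ∑ k ∈ range (N + 1), ((m ^ k / k.factorial : ℂ)) • T k y⁆)
    (hhom : g₀.toSubmodule ≤
      Submodule.span ℂ {x : g | ∃ n : ℕ, ∃ a : g, T n a = x}) :
    (Submodule.span ℂ {x : g | ∃ n : ℕ, ∃ a ∈ g₀, T n a = x} = g₀.toSubmodule) ∧
    (Submodule.span ℂ {x : g | ∃ n : ℕ, ∃ z ∈ LieAlgebra.center ℂ g, T n z = x} ≤
      (LieAlgebra.center ℂ g).toSubmodule) ∧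
    (∀ a ∈ g₀, T 0 a ∈ g₀ ∧ ∀ n : ℕ, 1 ≤ n → T n a = 0) :=
  conformal_averaging_on_reductive_general g₀ hred T N hsupp hT hhom
end

section
/- Let g be a Lie algebra and T_λ = Σ_{n≥0} λ^{(n)}T_n a conformal averaging operator on g (finitely many T_n nonzero). Define on the current Lie conformal algebra Cur g = ℂ[∂] ⊗ g the ℂ[∂]-linear map T(1⊗a) = Σ_n (−∂)^{(n)} ⊗ T_n(a). Then T([T(x)⁽ⁿ⁾ y]) = [T(x)⁽ⁿ⁾ T(y)] for all x,y ∈ Cur g and all n ∈ ℤ≥0. -/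
/-!
The defect `D_n(x, y) = T([T(x)⁽ⁿ⁾ y]) − [T(x)⁽ⁿ⁾ T(y)]` is bilinear, and since `T` commutes
with `∂`, the conformal axioms `[∂x ⁽ⁿ⁾ y] = −n[x ⁽ⁿ⁻¹⁾ y]` and
`[x ⁽ⁿ⁾ ∂y] = ∂[x ⁽ⁿ⁾ y] + n[x ⁽ⁿ⁻¹⁾ y]` give `D_n(∂x, y) = −n D_{n−1}(x, y)` and
`D_n(x, ∂y) = ∂D_n(x, y) + n D_{n−1}(x, y)`. So it suffices that `D_n(1⊗a, 1⊗b) = 0`.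
There `[T(1⊗a)⁽ⁿ⁾ 1⊗b] = 1⊗[T_n a, b]`, while substituting `(p, q) = (n − s, r + s)` in
`[T(1⊗a)⁽ⁿ⁾ T(1⊗b)] = Σ_{p,q} [(−∂)^(p) T_p a ⁽ⁿ⁾ (−∂)^(q) T_q b]` makes the coefficient of
`∂^r` equal to `(−1)^r/r! Σ_s (−1)^s C(n,s) [T_{n−s} a, T_{r+s} b] = (−1)^r/r! T_r[T_n a, b]`
by the averaging identity for `T_r([T_n(x), y])`.
-/

open Finset

/-- The current conformal algebra `Cur g = ℂ[∂] ⊗ g`, modelled as finitely supported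
functions `ℕ →₀ g` (the coefficient of `∂^i`).  The `n`-products are determined by
`(1⊗a)⁽ⁿ⁾(1⊗b) = δ_{n,0} 1⊗⁅a,b⁆` together with the conformal axioms
`[∂x ⁽ⁿ⁾ y] = −n[x ⁽ⁿ⁻¹⁾ y]` and `[x ⁽ⁿ⁾ ∂y] = ∂[x ⁽ⁿ⁾ y] + n[x ⁽ⁿ⁻¹⁾ y]`, which give
`[∂^i a ⁽ⁿ⁾ ∂^j b] = n! (−1)^i C(j, n−i) ∂^{j−(n−i)} ⊗ ⁅a,b⁆` (zero unless
`i ≤ n ≤ i + j`). -/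
noncomputable def curNProd {g : Type*} [LieRing g] [LieAlgebra ℂ g]
    (n : ℕ) (x y : ℕ →₀ g) : ℕ →₀ g :=
  x.sum fun i a => y.sum fun j b =>
    if i ≤ n ∧ n - i ≤ j then
      ((n.factorial : ℂ) * (-1) ^ i * (j.choose (n - i))) •
        Finsupp.single (j - (n - i)) ⁅a, b⁆
    else 0

/-- The `ℂ[∂]`-linear extension of `1⊗a ↦ Σ_n (−∂)^(n) ⊗ T_n a` to `Cur g`. -/
noncomputable def curAveraging {g : Type*} [LieRing g] [LieAlgebra ℂ g]
    (T : ℕ → (g →ₗ[ℂ] g)) (N : ℕ) (x : ℕ →₀ g) : ℕ →₀ g :=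
  x.sum fun i a => ∑ n ∈ range (N + 1),
    (((-1 : ℂ) ^ n / n.factorial) • Finsupp.single (i + n) (T n a))


section
variable {g : Type*} [LieRing g] [LieAlgebra ℂ g]

noncomputable def curAveragingₗ (T : ℕ → (g →ₗ[ℂ] g)) (N : ℕ) : (ℕ →₀ g) →ₗ[ℂ] (ℕ →₀ g) :=
  Finsupp.lsum ℂ fun i => ∑ p ∈ range (N + 1),
    ((-1 : ℂ) ^ p / p.factorial) • (Finsupp.lsingle (i + p)).comp (T p)

theorem curAveragingₗ_apply (T : ℕ → (g →ₗ[ℂ] g)) (N : ℕ) (x : ℕ →₀ g) :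
    curAveragingₗ T N x = curAveraging T N x := by
  rw [curAveragingₗ, curAveraging, Finsupp.lsum_apply]
  refine Finsupp.sum_congr fun i _ => ?_
  simp [Finsupp.smul_single]

theorem curAveragingₗ_single (T : ℕ → (g →ₗ[ℂ] g)) (N i : ℕ) (a : g) :
    curAveragingₗ T N (Finsupp.single i a) =
      ∑ p ∈ range (N + 1), ((-1 : ℂ) ^ p / p.factorial) • Finsupp.single (i + p) (T p a) := by
  simp [curAveragingₗ]

noncomputable def curNProdₗ (n : ℕ) : (ℕ →₀ g) →ₗ[ℂ] (ℕ →₀ g) →ₗ[ℂ] (ℕ →₀ g) :=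
  Finsupp.lsum ℂ fun i => (Finsupp.lsum ℂ fun j =>
    ((if i ≤ n ∧ n - i ≤ j then ((n.factorial : ℂ) * (-1) ^ i * (j.choose (n - i))) else 0) •
      (LieAlgebra.ad ℂ g : g →ₗ[ℂ] Module.End ℂ g).compr₂
        (Finsupp.lsingle (j - (n - i)))).flip).flip

theorem curNProdₗ_apply (n : ℕ) (x y : ℕ →₀ g) : curNProdₗ n x y = curNProd n x y := by
  simp [curNProdₗ, curNProd, Finsupp.lsum_apply, DFunLike.ite_apply, Finsupp.smul_single]

theorem curNProdₗ_single_single (n i j : ℕ) (a b : g) :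
    curNProdₗ n (Finsupp.single i a) (Finsupp.single j b) =
      if i ≤ n ∧ n - i ≤ j then
        ((n.factorial : ℂ) * (-1) ^ i * (j.choose (n - i))) • Finsupp.single (j - (n - i)) ⁅a, b⁆
      else 0 := by
  simp [curNProdₗ, DFunLike.ite_apply, Finsupp.smul_single]

theorem curNProdₗ_single_single_eq_zero {n p q : ℕ} (h : ¬ (p ≤ n ∧ n - p ≤ q)) (x y : g) :
    curNProdₗ n (Finsupp.single p x) (Finsupp.single q y) = 0 := by
  rw [curNProdₗ_single_single, if_neg h]

theorem curNProdₗ_single_sub_single_add {n s : ℕ} (hs : s ≤ n) (r : ℕ) (x y : g) :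
    curNProdₗ n (Finsupp.single (n - s) x) (Finsupp.single (r + s) y) =
      ((n.factorial : ℂ) * (-1) ^ (n - s) * (r + s).choose s) • Finsupp.single r ⁅x, y⁆ := by
  rw [curNProdₗ_single_single, if_pos (by omega), Nat.sub_sub_self hs, Nat.add_sub_cancel]

variable (g) in
noncomputable def curDeriv : (ℕ →₀ g) →ₗ[ℂ] (ℕ →₀ g) := Finsupp.lmapDomain g ℂ (· + 1)

theorem curDeriv_single (i : ℕ) (a : g) :
    curDeriv g (Finsupp.single i a) = Finsupp.single (i + 1) a := by
  simp [curDeriv]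

theorem curAveragingₗ_curDeriv (T : ℕ → (g →ₗ[ℂ] g)) (N : ℕ) (x : ℕ →₀ g) :
    curAveragingₗ T N (curDeriv g x) = curDeriv g (curAveragingₗ T N x) := by
  suffices curAveragingₗ T N ∘ₗ curDeriv g = curDeriv g ∘ₗ curAveragingₗ T N from
    LinearMap.congr_fun this x
  ext i a : 2
  simp [curAveragingₗ_single, curDeriv_single, add_right_comm]

theorem curNProdₗ_curDeriv_left (n : ℕ) (x y : ℕ →₀ g) :
    curNProdₗ n (curDeriv g x) y = -(n : ℂ) • curNProdₗ (n - 1) x y := by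
  suffices curNProdₗ n ∘ₗ curDeriv g = -(n : ℂ) • curNProdₗ (g := g) (n - 1) from
    LinearMap.congr_fun₂ this x y
  ext i a j b : 4
  simp only [LinearMap.comp_apply, Finsupp.lsingle_apply, curDeriv_single, LinearMap.smul_apply,
    curNProdₗ_single_single]
  rcases n with _ | k
  · simp
  · simp only [Nat.add_sub_add_right, Nat.add_sub_cancel, Nat.add_le_add_iff_right, smul_ite,
      smul_zero, smul_smul]
    congr 2
    push_cast [Nat.factorial_succ, pow_succ]
    ring

theorem curNProdₗ_curDeriv_right (n : ℕ) (x y : ℕ →₀ g) :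
    curNProdₗ n x (curDeriv g y) =
      curDeriv g (curNProdₗ n x y) + (n : ℂ) • curNProdₗ (n - 1) x y := by
  suffices (curNProdₗ n).compl₂ (curDeriv g) =
      (curNProdₗ n).compr₂ (curDeriv g) + (n : ℂ) • curNProdₗ (g := g) (n - 1) from
    LinearMap.congr_fun₂ this x y
  ext i a j b : 4
  simp only [LinearMap.compl₂_apply, LinearMap.compr₂_apply, LinearMap.comp_apply,
    Finsupp.lsingle_apply, curDeriv_single, LinearMap.add_apply, LinearMap.smul_apply,
    curNProdₗ_single_single, apply_ite (curDeriv g), map_smul, map_zero]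
  by_cases hni : n < i
  · simp [show ¬ i ≤ n by omega, show ¬ i ≤ n - 1 by omega]
  obtain ⟨k, rfl⟩ := Nat.exists_eq_add_of_le (not_lt.1 hni)
  rcases k with _ | k
  · rcases i.eq_zero_or_pos with rfl | hi0
    · simp
    · simp [show ¬ i ≤ i - 1 by omega]
  · simp only [le_add_iff_nonneg_right, zero_le, add_tsub_cancel_left, add_le_add_iff_right,
      true_and, Nat.reduceSubDiff, Finsupp.smul_single, Order.add_one_le_iff, Nat.cast_add,
      Nat.cast_one, Nat.add_succ_sub_one, smul_ite, smul_zero]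
    rcases lt_trichotomy k j with hkj | rfl | hjk
    · rw [if_pos hkj.le, if_pos hkj, if_pos hkj.le, show j - (k + 1) + 1 = j - k by omega,
        ← Finsupp.single_add, smul_smul, ← add_smul, Nat.choose_succ_succ', ← add_assoc,
        Nat.factorial_succ]
      congr 2
      push_cast
      ring
    · simp [← add_assoc, Nat.factorial_succ, smul_smul, mul_assoc]
    · simp [show ¬ k ≤ j by omega, show ¬ k < j by omega]

end

theorem neg_one_pow_div_factorial_mul_choose_eq {K : Type*} [Field K] [CharZero K]
    (n r s : ℕ) (hs : s ≤ n) :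
    (-1 : K) ^ r / r.factorial * ((-1) ^ s * n.choose s) =
      (-1) ^ (r + s) / (r + s).factorial * ((-1) ^ (n - s) / (n - s).factorial) *
        (n.factorial * (-1) ^ (n - s) * (r + s).choose s) := by
  rw [Nat.cast_choose K hs, Nat.add_comm r s, Nat.cast_add_choose]
  have h1 : ((-1 : K) ^ (n - s)) * (-1) ^ (n - s) = 1 := by rw [← mul_pow]; simp
  have h2 : ((s + r).factorial : K) ≠ 0 := Nat.cast_ne_zero.2 (Nat.factorial_ne_zero _)
  calc _ = (-1 : K) ^ (s + r) * ((-1) ^ (n - s) * (-1) ^ (n - s)) * n.factorial *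
        ((s + r).factorial / (s + r).factorial) /
          ((n - s).factorial * (s.factorial * r.factorial)) := by
        rw [h1, div_self h2]
        ring
    _ = _ := by ring

section
variable {g : Type*} [LieRing g] [LieAlgebra ℂ g] {T : ℕ → (g →ₗ[ℂ] g)} {N : ℕ}

theorem curNProdₗ_curAveragingₗ_single_zero (hsupp : ∀ n, N < n → T n = 0) (n : ℕ) (a b : g) :
    curNProdₗ n (curAveragingₗ T N (Finsupp.single 0 a)) (Finsupp.single 0 b) =
      Finsupp.single 0 ⁅T n a, b⁆ := by
  simp only [curAveragingₗ_single, zero_add, map_sum, map_smul, LinearMap.sum_apply,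
    LinearMap.smul_apply, curNProdₗ_single_single, nonpos_iff_eq_zero]
  rw [Finset.sum_eq_single n]
  · have : (-1 : ℂ) ^ n / n.factorial * (n.factorial * (-1) ^ n) = 1 := by
      rw [div_mul_eq_mul_div, mul_left_comm, ← mul_pow]
      simp [Nat.factorial_ne_zero]
    simp [smul_smul, this]
  · intro p _ hpn
    rw [if_neg (by omega), smul_zero]
  · intro hn
    simp [hsupp n (by simpa using hn)]

variable (T N) in
noncomputable def averagingDefect (n : ℕ) : (ℕ →₀ g) →ₗ[ℂ] (ℕ →₀ g) →ₗ[ℂ] (ℕ →₀ g) :=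
  ((curNProdₗ n).comp (curAveragingₗ T N)).compr₂ (curAveragingₗ T N) -
    ((curNProdₗ n).comp (curAveragingₗ T N)).compl₂ (curAveragingₗ T N)

theorem averagingDefect_apply (n : ℕ) (x y : ℕ →₀ g) :
    averagingDefect T N n x y =
      curAveragingₗ T N (curNProdₗ n (curAveragingₗ T N x) y) -
        curNProdₗ n (curAveragingₗ T N x) (curAveragingₗ T N y) :=
  rfl

theorem averagingDefect_single_zero (hsupp : ∀ n, N < n → T n = 0)
    (hT2 : ∀ (n m : ℕ) (x y : g),
      T m ⁅T n x, y⁆ =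
        ∑ s ∈ range (n + 1), ((-1 : ℂ) ^ s * n.choose s) • ⁅T (n - s) x, T (m + s) y⁆)
    (n : ℕ) (a b : g) :
    averagingDefect T N n (Finsupp.single 0 a) (Finsupp.single 0 b) = 0 := by
  rw [averagingDefect_apply, sub_eq_zero, curNProdₗ_curAveragingₗ_single_zero hsupp,
    curAveragingₗ_single]
  simp only [curAveragingₗ_single, zero_add, map_sum, map_smul, LinearMap.sum_apply,
    LinearMap.smul_apply, hT2, Finsupp.single_finsetSum, Finset.smul_sum]
  rw [← Finset.sum_product', ← Finset.sum_product']
  have reindex : ∀ r s, s ≤ n →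
      ((-1 : ℂ) ^ r / r.factorial) •
          Finsupp.single r (((-1 : ℂ) ^ s * n.choose s) • ⁅T (n - s) a, T (r + s) b⁆) =
        ((-1 : ℂ) ^ (r + s) / (r + s).factorial) • ((-1 : ℂ) ^ (n - s) / (n - s).factorial) •
          curNProdₗ n (Finsupp.single (n - s) (T (n - s) a))
            (Finsupp.single (r + s) (T (r + s) b)) := by
    intro r s hs
    rw [curNProdₗ_single_sub_single_add hs, smul_smul, smul_smul, ← Finsupp.smul_single,
      smul_smul, neg_one_pow_div_factorial_mul_choose_eq n r s hs]
  -- Terms with an index outside `range (N + 1)` vanish by `hsupp`.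
  refine Finset.sum_bij_ne_zero (fun rs _ _ => (rs.1 + rs.2, n - rs.2)) ?_ ?_ ?_ ?_
  · rintro ⟨r, s⟩ hrs hne
    simp only [Finset.mem_product, Finset.mem_range] at hrs ⊢
    constructor <;> by_contra hN <;> apply hne
    · simp [hsupp (r + s) (by omega)]
    · simp [hsupp (n - s) (by omega)]
  · rintro ⟨r, s⟩ hrs - ⟨r', s'⟩ hrs' - he
    simp only [Finset.mem_product, Finset.mem_range, Prod.mk.injEq] at hrs hrs' he ⊢
    omega
  · rintro ⟨q, p⟩ hqp hne
    simp only [Finset.mem_product, Finset.mem_range] at hqp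
    have hguard : p ≤ n ∧ n - p ≤ q := by
      by_contra h
      exact hne (by rw [curNProdₗ_single_single_eq_zero h, smul_zero, smul_zero])
    obtain ⟨s, hs, rfl⟩ : ∃ s ≤ n, p = n - s := ⟨n - p, Nat.sub_le n p, by omega⟩
    obtain ⟨r, rfl⟩ : ∃ r, q = r + s := ⟨q - s, by omega⟩
    refine ⟨(r, s), by simp only [Finset.mem_product, Finset.mem_range]; omega, ?_, rfl⟩
    rwa [reindex r s hs]
  · rintro ⟨r, s⟩ hrs -
    simp only [Finset.mem_product, Finset.mem_range] at hrs
    exact reindex r s (by omega)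

theorem averagingDefect_curDeriv_left (n : ℕ) (x y : ℕ →₀ g) :
    averagingDefect T N n (curDeriv g x) y = -(n : ℂ) • averagingDefect T N (n - 1) x y := by
  simp only [averagingDefect_apply, curAveragingₗ_curDeriv T N, curNProdₗ_curDeriv_left, map_smul,
    smul_sub]

theorem averagingDefect_curDeriv_right (n : ℕ) (x y : ℕ →₀ g) :
    averagingDefect T N n x (curDeriv g y) =
      curDeriv g (averagingDefect T N n x y) + (n : ℂ) • averagingDefect T N (n - 1) x y := by
  simp only [averagingDefect_apply, curAveragingₗ_curDeriv T N, curNProdₗ_curDeriv_right, map_add,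
    map_smul, map_sub, smul_sub]
  abel

theorem averagingDefect_eq_zero (hsupp : ∀ n, N < n → T n = 0)
    (hT2 : ∀ (n m : ℕ) (x y : g),
      T m ⁅T n x, y⁆ =
        ∑ s ∈ range (n + 1), ((-1 : ℂ) ^ s * n.choose s) • ⁅T (n - s) x, T (m + s) y⁆)
    (n : ℕ) : averagingDefect T N n = 0 := by
  ext i a j b : 4
  simp only [LinearMap.comp_apply, Finsupp.lsingle_apply, LinearMap.zero_apply]
  induction i generalizing n with
  | zero =>
    induction j generalizing n with
    | zero => exact averagingDefect_single_zero hsupp hT2 n a b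
    | succ j ih =>
      rw [← curDeriv_single, averagingDefect_curDeriv_right, ih, ih, map_zero, smul_zero, add_zero]
  | succ i ih => rw [← curDeriv_single, averagingDefect_curDeriv_left, ih, smul_zero]

end

theorem conformal_averaging_is_averaging_on_current_general {g : Type*} [LieRing g]
    [LieAlgebra ℂ g]
    (T : ℕ → (g →ₗ[ℂ] g)) (N : ℕ) (hsupp : ∀ n, N < n → T n = 0)
    (hT2 : ∀ (n m : ℕ) (x y : g),
      T m ⁅T n x, y⁆ =
        ∑ s ∈ range (n + 1), ((-1 : ℂ) ^ s * n.choose s) • ⁅T (n - s) x, T (m + s) y⁆) :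
    ∀ (x y : ℕ →₀ g) (n : ℕ),
      curAveraging T N (curNProd n (curAveraging T N x) y) =
        curNProd n (curAveraging T N x) (curAveraging T N y) := by
  intro x y n
  simpa only [averagingDefect_apply, curAveragingₗ_apply, curNProdₗ_apply, LinearMap.zero_apply,
    sub_eq_zero] using LinearMap.congr_fun₂ (averagingDefect_eq_zero hsupp hT2 n) x y

/-- A conformal averaging operator `T_λ` on a Lie algebra `g` induces an averaging
operator `T(1⊗a) = Σ_n (−∂)^(n) ⊗ T_n(a)` on the current conformal algebra `Cur g`:
`T([T(x)⁽ⁿ⁾ y]) = [T(x)⁽ⁿ⁾ T(y)]` for all `x, y ∈ Cur g` and `n ∈ ℤ≥0`. -/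
theorem conformal_averaging_is_averaging_on_current {g : Type*} [LieRing g]
    [LieAlgebra ℂ g]
    (T : ℕ → (g →ₗ[ℂ] g)) (N : ℕ) (hsupp : ∀ n, N < n → T n = 0)
    (hT1 : ∀ (n m : ℕ) (x y : g),
      ⁅T n x, T m y⁆ =
        ∑ t ∈ range (n + 1), (n.choose t : ℂ) • T (m + t) ⁅T (n - t) x, y⁆)
    (hT2 : ∀ (n m : ℕ) (x y : g),
      T m ⁅T n x, y⁆ =
        ∑ s ∈ range (n + 1), ((-1 : ℂ) ^ s * n.choose s) • ⁅T (n - s) x, T (m + s) y⁆) :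
    ∀ (x y : ℕ →₀ g) (n : ℕ),
      curAveraging T N (curNProd n (curAveraging T N x) y) =
        curNProd n (curAveraging T N x) (curAveraging T N y) :=
  conformal_averaging_is_averaging_on_current_general T N hsupp hT2
end

section
/- Let C be a Lie conformal algebra and T : C → C a ℂ[∂]-linear map with T([T(a)⁽ⁿ⁾ b]) = [T(a)⁽ⁿ⁾ T(b)] for all a,b ∈ C, n ≥ 0. Then the new products {a ⁽ⁿ⁾ b} := [T(a)⁽ⁿ⁾ b] satisfy the conformal Jacobi identity {a ⁽ⁿ⁾ {b ⁽ᵐ⁾ c}} − {b ⁽ᵐ⁾ {a ⁽ⁿ⁾ c}} = Σ_{s≥0} C(n,s) {{a ⁽ⁿ⁻ˢ⁾ b} ⁽ᵐ⁺ˢ⁾ c}, i.e., (C, {·⁽ⁿ⁾·}) is a Leibniz conformal algebra. -/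
open Finset in
/-- Let `C` be a Lie conformal algebra (a `ℂ[∂]`-module with bilinear `n`-products
satisfying locality, the `∂`-rules, conformal skew-symmetry and the conformal Jacobi
identity) and let `T` be a `ℂ[∂]`-linear conformal averaging operator on `C`, i.e.
`T([T(a)⁽ⁿ⁾ b]) = [T(a)⁽ⁿ⁾ T(b)]`.  Then the new products `{a ⁽ⁿ⁾ b} := [T(a)⁽ⁿ⁾ b]`
satisfy the conformal Jacobi identity, so `(C, {·⁽ⁿ⁾·})` is a Leibniz conformal
algebra. -/
theorem conformal_averaging_gives_leibniz_conformal {C : Type*} [AddCommGroup C]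
    [Module ℂ C]
    (D : C →ₗ[ℂ] C) (prod : ℕ → C →ₗ[ℂ] C →ₗ[ℂ] C)
    (hloc : ∀ a b : C, ∃ M : ℕ, ∀ n, M ≤ n → prod n a b = 0)
    (hC2zero : ∀ a b : C, prod 0 (D a) b = 0)
    (hC2 : ∀ (a b : C) (n : ℕ),
      prod (n + 1) (D a) b = -((n + 1 : ℕ) : ℂ) • prod n a b)
    (hC3zero : ∀ a b : C, prod 0 a (D b) = D (prod 0 a b))
    (hC3 : ∀ (a b : C) (n : ℕ),
      prod (n + 1) a (D b) = D (prod (n + 1) a b) + ((n + 1 : ℕ) : ℂ) • prod n a b)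
    (hskew : ∀ (a b : C) (n : ℕ) (M : ℕ), (∀ m, M ≤ m → prod m b a = 0) →
      prod n a b =
        ∑ s ∈ range M, ((-1 : ℂ) ^ (n + s + 1) / s.factorial) • (D ^ s) (prod (n + s) b a))
    (hjacobi : ∀ (a b c : C) (n m : ℕ),
      prod n a (prod m b c) - prod m b (prod n a c) =
        ∑ s ∈ range (n + 1), (n.choose s : ℂ) • prod (m + s) (prod (n - s) a b) c)
    (T : C →ₗ[ℂ] C) (hTD : T ∘ₗ D = D ∘ₗ T)
    (hT : ∀ (a b : C) (n : ℕ), T (prod n (T a) b) = prod n (T a) (T b)) :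
    ∀ (a b c : C) (n m : ℕ),
      prod n (T a) (prod m (T b) c) - prod m (T b) (prod n (T a) c) =
        ∑ s ∈ range (n + 1), (n.choose s : ℂ) •
          prod (m + s) (T (prod (n - s) (T a) b)) c := by
  intro a b c n m
  simp_rw [hT]
  exact hjacobi (T a) (T b) c n m
end
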